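/- arXiv:2508.18325 — 2 statements merged into one kernel-verified Lean document; each statement's English description precedes it below -/
import Mathlib

section
/- Let G = (X, Y, E) be a bipartite graph and let Ê be a set of edges disjoint from E such that: (a) every subset F̂ ⊆ Ê satisfies that every x ∈ X incident to an edge of F̂ participates in all maximum matchings of (X, Y, E ∪ F̂), and (b) Ê is minimal, i.e., for every e ∈ Ê, μ(E ∪ (Ê \ {e})) < μ(E ∪ Ê). Then μ(E ∪ Ê) = μ(E) + |Ê|. -/
open Finset

variable {α β : Type*}

/-- A matching: no two distinct edges share an X-endpoint or a Y-endpoint. -/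
def IsMatching (M : Finset (α × β)) : Prop :=
  (∀ e ∈ M, ∀ f ∈ M, e.1 = f.1 → e = f) ∧ (∀ e ∈ M, ∀ f ∈ M, e.2 = f.2 → e = f)

/-- `M` is a maximum (cardinality) matching of the bipartite graph with edge set `E`. -/
def IsMaxMatching (E M : Finset (α × β)) : Prop :=
  M ⊆ E ∧ IsMatching M ∧ ∀ M', M' ⊆ E → IsMatching M' → M'.card ≤ M.card

open Classical in
/-- μ(E): size of a maximum matching of the bipartite graph with edge set `E`. -/
noncomputable def mu (E : Finset (α × β)) : ℕ :=
  (E.powerset.filter IsMatching).sup Finset.card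

/-- The X-vertex `x` is matched (participates) in `M`. -/
def Matched (M : Finset (α × β)) (x : α) : Prop := ∃ y, (x, y) ∈ M

/-- `x` participates in all maximum matchings of `(X, Y, E)` (i.e. `x ∈ Γ(E)`). -/
def InAllMax (E : Finset (α × β)) (x : α) : Prop :=
  ∀ M, IsMaxMatching E M → Matched M x

lemma isMatching_subset {M N : Finset (α × β)} (h : IsMatching M) (hs : N ⊆ M) :
    IsMatching N :=
  ⟨fun a ha b hb hab => h.1 a (hs ha) b (hs hb) hab,
   fun a ha b hb hab => h.2 a (hs ha) b (hs hb) hab⟩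

lemma isMatching_empty : IsMatching (∅ : Finset (α × β)) := by
  constructor <;> intro a ha <;> simp at ha

lemma le_mu {E M : Finset (α × β)} (hs : M ⊆ E) (hm : IsMatching M) : M.card ≤ mu E := by
  classical
  unfold mu
  exact Finset.le_sup (by simp [Finset.mem_filter, Finset.mem_powerset, hs, hm])

lemma exists_isMaxMatching (E : Finset (α × β)) : ∃ M, IsMaxMatching E M ∧ M.card = mu E := by
  classical
  have hne : (E.powerset.filter IsMatching).Nonempty :=
    ⟨∅, by simp [Finset.mem_filter, isMatching_empty]⟩
  obtain ⟨M, hM, hsup⟩ := Finset.exists_mem_eq_sup _ hne Finset.card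
  simp only [Finset.mem_filter, Finset.mem_powerset] at hM
  refine ⟨M, ⟨hM.1, hM.2, fun M' h1 h2 => ?_⟩, ?_⟩
  · have := le_mu h1 h2
    unfold mu at this
    omega
  · unfold mu
    omega

lemma IsMaxMatching.card_eq {E M : Finset (α × β)} (h : IsMaxMatching E M) :
    M.card = mu E := by
  obtain ⟨N, hN, hc⟩ := exists_isMaxMatching E
  exact le_antisymm (le_mu h.1 h.2.1) (hc ▸ h.2.2 N hN.1 hN.2.1)

lemma mu_mono {A B : Finset (α × β)} (h : A ⊆ B) : mu A ≤ mu B := by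
  obtain ⟨M, hM, hc⟩ := exists_isMaxMatching A
  exact hc ▸ le_mu (hM.1.trans h) hM.2.1

lemma mu_insert_le [DecidableEq α] [DecidableEq β] (g : α × β) (A : Finset (α × β)) :
    mu (insert g A) ≤ mu A + 1 := by
  obtain ⟨M, hM, hc⟩ := exists_isMaxMatching (insert g A)
  rw [← hc]
  have hsub : M.erase g ⊆ A := fun x hx => by
    have hx1 := Finset.mem_of_mem_erase hx
    have hx2 := Finset.ne_of_mem_erase hx
    rcases Finset.mem_insert.mp (hM.1 hx1) with h | h
    · exact absurd h hx2
    · exact h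
  have hle : (M.erase g).card ≤ mu A := le_mu hsub (isMatching_subset hM.2.1 (Finset.erase_subset _ _))
  by_cases hg : g ∈ M
  · have := Finset.card_erase_of_mem hg
    omega
  · rw [Finset.erase_eq_of_notMem hg] at hle
    omega

/-- Key "descent" lemma: there is no matching of `E ∪ Ê` of size `μ(E ∪ Ê) - 1`
avoiding two distinct edges `e, f ∈ Ê`. Proved by strong induction on `|M'' \ M|`. -/
lemma descent [DecidableEq α] [DecidableEq β] (E Ehat : Finset (α × β))
    (hSB : ∀ F ⊆ Ehat, ∀ e ∈ F, InAllMax (E ∪ F) e.1)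
    (hmin : ∀ e ∈ Ehat, mu (E ∪ Ehat.erase e) < mu (E ∪ Ehat))
    {e f : α × β} (he : e ∈ Ehat) (hf : f ∈ Ehat) (hef : e ≠ f)
    {M : Finset (α × β)} (hM : IsMaxMatching (E ∪ Ehat) M) :
    ∀ n M'', (M'' \ M).card = n → IsMatching M'' → M'' ⊆ E ∪ Ehat → e ∉ M'' → f ∉ M'' →
      M''.card + 1 = M.card → False := by
  intro n
  induction n using Nat.strong_induction_on with
  | _ n IH =>
  intro M'' hn hm'' hsub'' heM hfM hcard
  have hmuE : mu (E ∪ Ehat) = M.card := hM.card_eq.symm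
  -- M'' is a maximum matching of E ∪ (Ehat.erase f) and of E ∪ (Ehat.erase e)
  have hmaxof : ∀ g : α × β, g ∈ Ehat → g ∉ M'' → IsMaxMatching (E ∪ Ehat.erase g) M'' := by
    intro g hg hgM
    have hsubg : M'' ⊆ E ∪ Ehat.erase g := by
      intro a ha
      rcases Finset.mem_union.mp (hsub'' ha) with h | h
      · exact Finset.mem_union.mpr (Or.inl h)
      · exact Finset.mem_union.mpr (Or.inr (Finset.mem_erase.mpr ⟨fun hae => hgM (hae ▸ ha), h⟩))
    refine ⟨hsubg, hm'', fun M' h1 h2 => ?_⟩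
    have := le_mu h1 h2
    have := hmin g hg
    omega
  have hxe : Matched M'' e.1 :=
    hSB (Ehat.erase f) (Finset.erase_subset _ _) e (Finset.mem_erase.mpr ⟨hef, he⟩) M''
      (hmaxof f hf hfM)
  have hxf : Matched M'' f.1 :=
    hSB (Ehat.erase e) (Finset.erase_subset _ _) f (Finset.mem_erase.mpr ⟨hef.symm, hf⟩) M''
      (hmaxof e he heM)
  by_cases hred : ∃ g ∈ M, g ∉ M'' ∧ g ≠ e ∧ g ≠ f ∧
      ((∀ h ∈ M'', h.1 ≠ g.1) ∨ (∀ h ∈ M'', h.2 ≠ g.2))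
  · -- reduction step
    obtain ⟨g, hgM, hgM'', hge, hgf, hbad⟩ := hred
    -- first: if both endpoints of g are uncovered, direct contradiction
    by_cases hboth : (∀ h ∈ M'', h.1 ≠ g.1) ∧ (∀ h ∈ M'', h.2 ≠ g.2)
    · have hmatchN : IsMatching (insert g M'') := by
        constructor
        · intro a ha b hb hab
          rcases Finset.mem_insert.mp ha with ha' | ha' <;>
            rcases Finset.mem_insert.mp hb with hb' | hb'
          · rw [ha', hb']
          · exact absurd (show b.1 = g.1 by rw [← hab, ha']) (hboth.1 b hb')
          · exact absurd (show a.1 = g.1 by rw [hab, hb']) (hboth.1 a ha')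
          · exact hm''.1 a ha' b hb' hab
        · intro a ha b hb hab
          rcases Finset.mem_insert.mp ha with ha' | ha' <;>
            rcases Finset.mem_insert.mp hb with hb' | hb'
          · rw [ha', hb']
          · exact absurd (show b.2 = g.2 by rw [← hab, ha']) (hboth.2 b hb')
          · exact absurd (show a.2 = g.2 by rw [hab, hb']) (hboth.2 a ha')
          · exact hm''.2 a ha' b hb' hab
      have hsubN : insert g M'' ⊆ E ∪ Ehat.erase e := by
        intro a ha
        have haEE : a ∈ E ∪ Ehat := by
          rcases Finset.mem_insert.mp ha with h | h
          · exact h ▸ hM.1 hgM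
          · exact hsub'' h
        have hane : a ≠ e := by
          rcases Finset.mem_insert.mp ha with h | h
          · exact h ▸ hge
          · exact fun hh => heM (hh ▸ h)
        rcases Finset.mem_union.mp haEE with h | h
        · exact Finset.mem_union.mpr (Or.inl h)
        · exact Finset.mem_union.mpr (Or.inr (Finset.mem_erase.mpr ⟨hane, h⟩))
      have hle := le_mu hsubN hmatchN
      have hcardN : (insert g M'').card = M''.card + 1 := Finset.card_insert_of_notMem hgM''
      have := hmin e he
      omega
    · -- exactly one endpoint uncovered: swap
      -- identify h ∈ M'' covering the other endpoint, and that h ∉ M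
      have key : ∃ h ∈ M'', h ∉ M ∧ IsMatching (insert g (M''.erase h)) := by
        rcases hbad with hb1 | hb2
        · -- g.1 uncovered; g.2 must be covered (else hboth)
          have hq : ∃ h ∈ M'', h.2 = g.2 := by
            by_contra hq
            push_neg at hq
            exact hboth ⟨hb1, hq⟩
          obtain ⟨h, hh, hh2⟩ := hq
          refine ⟨h, hh, ?_, ?_, ?_⟩
          · intro hhM
            exact hgM'' ((hM.2.1.2 h hhM g hgM hh2) ▸ hh)
          · intro a ha b hb hab
            rcases Finset.mem_insert.mp ha with ha' | ha' <;>
              rcases Finset.mem_insert.mp hb with hb' | hb'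
            · rw [ha', hb']
            · exact absurd (show b.1 = g.1 by rw [← hab, ha']) (hb1 b (Finset.mem_of_mem_erase hb'))
            · exact absurd (show a.1 = g.1 by rw [hab, hb']) (hb1 a (Finset.mem_of_mem_erase ha'))
            · exact hm''.1 a (Finset.mem_of_mem_erase ha') b (Finset.mem_of_mem_erase hb') hab
          · intro a ha b hb hab
            rcases Finset.mem_insert.mp ha with ha' | ha' <;>
              rcases Finset.mem_insert.mp hb with hb' | hb'
            · rw [ha', hb']
            · exfalso
              have : b = h := hm''.2 b (Finset.mem_of_mem_erase hb') h hh (by rw [← hab, ha', ← hh2])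
              exact Finset.ne_of_mem_erase hb' this
            · exfalso
              have : a = h := hm''.2 a (Finset.mem_of_mem_erase ha') h hh (by rw [hab, hb', ← hh2])
              exact Finset.ne_of_mem_erase ha' this
            · exact hm''.2 a (Finset.mem_of_mem_erase ha') b (Finset.mem_of_mem_erase hb') hab
        · -- g.2 uncovered; g.1 must be covered
          have hq : ∃ h ∈ M'', h.1 = g.1 := by
            by_contra hq
            push_neg at hq
            exact hboth ⟨hq, hb2⟩
          obtain ⟨h, hh, hh1⟩ := hq
          refine ⟨h, hh, ?_, ?_, ?_⟩
          · intro hhM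
            exact hgM'' ((hM.2.1.1 h hhM g hgM hh1) ▸ hh)
          · intro a ha b hb hab
            rcases Finset.mem_insert.mp ha with ha' | ha' <;>
              rcases Finset.mem_insert.mp hb with hb' | hb'
            · rw [ha', hb']
            · exfalso
              have : b = h := hm''.1 b (Finset.mem_of_mem_erase hb') h hh (by rw [← hab, ha', ← hh1])
              exact Finset.ne_of_mem_erase hb' this
            · exfalso
              have : a = h := hm''.1 a (Finset.mem_of_mem_erase ha') h hh (by rw [hab, hb', ← hh1])
              exact Finset.ne_of_mem_erase ha' this
            · exact hm''.1 a (Finset.mem_of_mem_erase ha') b (Finset.mem_of_mem_erase hb') hab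
          · intro a ha b hb hab
            rcases Finset.mem_insert.mp ha with ha' | ha' <;>
              rcases Finset.mem_insert.mp hb with hb' | hb'
            · rw [ha', hb']
            · exact absurd (show b.2 = g.2 by rw [← hab, ha']) (hb2 b (Finset.mem_of_mem_erase hb'))
            · exact absurd (show a.2 = g.2 by rw [hab, hb']) (hb2 a (Finset.mem_of_mem_erase ha'))
            · exact hm''.2 a (Finset.mem_of_mem_erase ha') b (Finset.mem_of_mem_erase hb') hab
      obtain ⟨h, hh, hhM, hmatchN⟩ := key
      set N := insert g (M''.erase h) with hN
      have hgNe : g ∉ M''.erase h := fun hmem => hgM'' (Finset.mem_of_mem_erase hmem)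
      have hNsub : N ⊆ E ∪ Ehat := by
        intro a ha
        rcases Finset.mem_insert.mp ha with h' | h'
        · exact h' ▸ hM.1 hgM
        · exact hsub'' (Finset.mem_of_mem_erase h')
      have heN : e ∉ N := by
        intro hx
        rcases Finset.mem_insert.mp hx with h' | h'
        · exact hge h'.symm
        · exact heM (Finset.mem_of_mem_erase h')
      have hfN : f ∉ N := by
        intro hx
        rcases Finset.mem_insert.mp hx with h' | h'
        · exact hgf h'.symm
        · exact hfM (Finset.mem_of_mem_erase h')
      have hcardN : N.card + 1 = M.card := by
        have h1 : N.card = (M''.erase h).card + 1 := Finset.card_insert_of_notMem hgNe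
        have h2 : (M''.erase h).card = M''.card - 1 := Finset.card_erase_of_mem hh
        have h3 : 1 ≤ M''.card := Finset.card_pos.mpr ⟨h, hh⟩
        omega
      have hNdiff : N \ M = (M'' \ M).erase h := by
        ext a
        simp only [hN, Finset.mem_sdiff, Finset.mem_insert, Finset.mem_erase]
        constructor
        · rintro ⟨h1 | h1, h2⟩
          · exact absurd (h1 ▸ hgM) h2
          · exact ⟨h1.1, h1.2, h2⟩
        · rintro ⟨h1, h2, h3⟩
          exact ⟨Or.inr ⟨h1, h2⟩, h3⟩
      have hhdiff : h ∈ M'' \ M := Finset.mem_sdiff.mpr ⟨hh, hhM⟩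
      have hmeas : (N \ M).card < n := by
        rw [hNdiff, Finset.card_erase_of_mem hhdiff, ← hn]
        have : 1 ≤ (M'' \ M).card := Finset.card_pos.mpr ⟨h, hhdiff⟩
        omega
      exact IH _ hmeas N rfl hmatchN hNsub heN hfN hcardN
  · -- base case: every X-endpoint of M is covered by M''
    push_neg at hred
    have hcov : ∀ g ∈ M, ∃ h ∈ M'', h.1 = g.1 := by
      intro g hg
      by_cases hgM'' : g ∈ M''
      · exact ⟨g, hgM'', rfl⟩
      by_cases hge : g = e
      · obtain ⟨y, hy⟩ := hxe
        exact ⟨(e.1, y), hy, by rw [hge]⟩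
      by_cases hgf : g = f
      · obtain ⟨y, hy⟩ := hxf
        exact ⟨(f.1, y), hy, by rw [hgf]⟩
      · exact (hred g hg hgM'' hge hgf).1
    have himg : M.image Prod.fst ⊆ M''.image Prod.fst := by
      intro x hx
      obtain ⟨g, hg, rfl⟩ := Finset.mem_image.mp hx
      obtain ⟨h, hh, hh1⟩ := hcov g hg
      exact Finset.mem_image.mpr ⟨h, hh, hh1⟩
    have h1 : (M.image Prod.fst).card = M.card :=
      Finset.card_image_of_injOn (fun a ha b hb hab =>
        hM.2.1.1 a (Finset.mem_coe.mp ha) b (Finset.mem_coe.mp hb) hab)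
    have h2 := Finset.card_le_card himg
    have h3 : (M''.image Prod.fst).card ≤ M''.card := Finset.card_image_le
    omega

lemma main_aux [DecidableEq α] [DecidableEq β] :
    ∀ n (E Ehat : Finset (α × β)), Ehat.card = n →
    (∀ e ∈ Ehat, e ∉ E) →
    (∀ F ⊆ Ehat, ∀ e ∈ F, InAllMax (E ∪ F) e.1) →
    (∀ e ∈ Ehat, mu (E ∪ Ehat.erase e) < mu (E ∪ Ehat)) →
    mu (E ∪ Ehat) = mu E + Ehat.card := by
  intro n
  induction n with
  | zero =>
    intro E Ehat hcard _ _ _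
    rw [Finset.card_eq_zero.mp hcard]
    simp
  | succ n IH =>
    intro E Ehat hcard hdisj hSB hmin
    obtain ⟨e, he⟩ := Finset.card_pos.mp (by omega : 0 < Ehat.card)
    set F := Ehat.erase e with hF
    have hFcard : F.card = n := by
      rw [hF, Finset.card_erase_of_mem he]; omega
    obtain ⟨M, hM, hMcard⟩ := exists_isMaxMatching (E ∪ Ehat)
    have hmuM : mu (E ∪ Ehat) = M.card := hMcard.symm
    have hk1 : mu (E ∪ F) < M.card := hmuM ▸ hmin e he
    have hk2 : M.card ≤ mu (E ∪ F) + 1 := by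
      have hins : E ∪ Ehat = insert e (E ∪ F) := by
        rw [hF, ← Finset.union_insert, Finset.insert_erase he]
      calc M.card = mu (E ∪ Ehat) := hmuM.symm
        _ = mu (insert e (E ∪ F)) := by rw [hins]
        _ ≤ mu (E ∪ F) + 1 := mu_insert_le _ _
    have hm_eq : M.card = mu (E ∪ F) + 1 := by omega
    have hdisjF : ∀ g ∈ F, g ∉ E := fun g hg => hdisj g (Finset.mem_of_mem_erase hg)
    have hSBF : ∀ F' ⊆ F, ∀ g ∈ F', InAllMax (E ∪ F') g.1 :=
      fun F' hF' => hSB F' (hF'.trans (Finset.erase_subset _ _))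
    have hminF : ∀ g ∈ F, mu (E ∪ F.erase g) < mu (E ∪ F) := by
      intro g hg
      have hgEhat : g ∈ Ehat := Finset.mem_of_mem_erase hg
      have hgne : g ≠ e := Finset.ne_of_mem_erase hg
      by_contra hcon
      push_neg at hcon
      have hle : mu (E ∪ F.erase g) ≤ mu (E ∪ F) :=
        mu_mono (Finset.union_subset_union_right (Finset.erase_subset _ _))
      have heq : mu (E ∪ F.erase g) = mu (E ∪ F) := le_antisymm hle hcon
      obtain ⟨M₂, hM₂, hM₂card⟩ := exists_isMaxMatching (E ∪ F.erase g)
      have hM₂sub : M₂ ⊆ E ∪ Ehat :=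
        hM₂.1.trans (Finset.union_subset_union_right
          ((Finset.erase_subset _ _).trans (Finset.erase_subset _ _)))
      have heM₂ : e ∉ M₂ := by
        intro hx
        rcases Finset.mem_union.mp (hM₂.1 hx) with h | h
        · exact hdisj e he h
        · exact Finset.ne_of_mem_erase (Finset.mem_of_mem_erase h) rfl
      have hgM₂ : g ∉ M₂ := by
        intro hx
        rcases Finset.mem_union.mp (hM₂.1 hx) with h | h
        · exact hdisj g hgEhat h
        · exact Finset.ne_of_mem_erase h rfl
      exact descent E Ehat hSB hmin he hgEhat (Ne.symm hgne) hM (M₂ \ M).card M₂ rfl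
        hM₂.2.1 hM₂sub heM₂ hgM₂ (by omega)
    have hIH := IH E F hFcard hdisjF hSBF hminF
    have : mu (E ∪ Ehat) = mu (E ∪ F) + 1 := by omega
    rw [this, hIH]
    omega

/-- If `Ê` is disjoint from `E`, satisfies the strong benefit guarantee (every subset `F̂ ⊆ Ê`
has all its X-endpoints in `Γ(E ∪ F̂)`), and is minimal (removing any single edge strictly
decreases the maximum matching size), then `μ(E ∪ Ê) = μ(E) + |Ê|`. -/
theorem stmt_7 [DecidableEq α] [DecidableEq β] (E Ehat : Finset (α × β))
    (hdisj : ∀ e ∈ Ehat, e ∉ E)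
    (hSB : ∀ F ⊆ Ehat, ∀ e ∈ F, InAllMax (E ∪ F) e.1)
    (hmin : ∀ e ∈ Ehat, mu (E ∪ Ehat.erase e) < mu (E ∪ Ehat)) :
    mu (E ∪ Ehat) = mu E + Ehat.card := by
  exact main_aux Ehat.card E Ehat rfl hdisj hSB hmin
end

section
/- Let G = (X, Y, E) be a bipartite graph with maximum matching M, and let x ∈ X be matched by M. If there is no even-length alternating path (with respect to M) from x to a free vertex, then x participates in every maximum matching of G. -/
open Finset

variable {α β : Type*}

/-- An even-length alternating path (w.r.t. `M`) from `x` to `x'`: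
vertices `x = x_0, y_0, x_1, y_1, ..., x_k = x'` with `(x_i, y_i) ∈ M` and
`(x_{i+1}, y_i) ∈ E \ M`, all vertices distinct (2k edges, an even number). -/
def EvenAltPath (E M : Finset (α × β)) (x x' : α) : Prop :=
  ∃ (k : ℕ) (f : Fin (k + 1) → α) (g : Fin k → β),
    Function.Injective f ∧ Function.Injective g ∧
    f 0 = x ∧ f (Fin.last k) = x' ∧
    (∀ i : Fin k, (f i.castSucc, g i) ∈ M) ∧
    (∀ i : Fin k, (f i.succ, g i) ∈ E ∧ (f i.succ, g i) ∉ M)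

/-!
Suppose a maximum matching `N` misses `x`. The `M`-edge `xy` meets an `N`-edge `x'y`, since
otherwise `N + xy` would be a larger matching. Trading `x'y` for `xy` yields a maximum matching
that misses `x'` and shares one more edge with `M`, so induction produces an `M`/`N`-alternating
chain `x, y, x', …` ending at a vertex free in `M`. Its `N`-edges are not in `M`, and since both
`M` and `N` are matchings and the chain starts at an `N`-free vertex, it never revisits a vertex:
it is an even alternating path from `x` to an `M`-free vertex.
-/

namespace IsMatching

variable {M N : Finset (α × β)}

lemma snd_eq_of_mem (hM : IsMatching M) {a : α} {b b' : β} (h : (a, b) ∈ M)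
    (h' : (a, b') ∈ M) : b = b' :=
  congrArg Prod.snd (hM.1 _ h _ h' rfl)

lemma fst_eq_of_mem (hM : IsMatching M) {a a' : α} {b : β} (h : (a, b) ∈ M)
    (h' : (a', b) ∈ M) : a = a' :=
  congrArg Prod.fst (hM.2 _ h _ h' rfl)

lemma subset (hM : IsMatching M) (hNM : N ⊆ M) : IsMatching N :=
  ⟨fun e he f hf => hM.1 e (hNM he) f (hNM hf), fun e he f hf => hM.2 e (hNM he) f (hNM hf)⟩

lemma insert_of_free [DecidableEq α] [DecidableEq β] (hM : IsMatching M) {x : α} {y : β}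
    (hx : ¬ Matched M x) (hy : ∀ a, (a, y) ∉ M) : IsMatching (insert (x, y) M) := by
  constructor
  · rintro ⟨a, b⟩ he ⟨a', b'⟩ hf (rfl : a = a')
    simp only [mem_insert, Prod.mk.injEq] at he hf
    rcases he with ⟨rfl, rfl⟩ | he <;> rcases hf with ⟨ha, rfl⟩ | hf
    · rfl
    · exact absurd ⟨b', hf⟩ hx
    · exact absurd ⟨b, ha ▸ he⟩ hx
    · exact hM.1 _ he _ hf rfl
  · rintro ⟨a, b⟩ he ⟨a', b'⟩ hf (rfl : b = b')
    simp only [mem_insert, Prod.mk.injEq] at he hf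
    rcases he with ⟨rfl, rfl⟩ | he <;> rcases hf with ⟨rfl, hb⟩ | hf
    · rfl
    · exact absurd hf (hy a')
    · exact absurd (hb ▸ he) (hy a)
    · exact hM.2 _ he _ hf rfl

end IsMatching

section Reassign

variable [DecidableEq α] [DecidableEq β] {E N : Finset (α × β)} {x x' : α} {y : β}

lemma IsMatching.reassign (hN : IsMatching N) (hx : ¬ Matched N x) (hx'y : (x', y) ∈ N) :
    IsMatching (insert (x, y) (N.erase (x', y))) := by
  refine (hN.subset (erase_subset _ _)).insert_of_free
    (fun ⟨b, hb⟩ => hx ⟨b, mem_of_mem_erase hb⟩) fun a ha => ?_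
  obtain ⟨hne, ha⟩ := mem_erase.1 ha
  exact hne (by rw [hN.fst_eq_of_mem ha hx'y])

lemma not_matched_reassign (hN : IsMatching N) (hx'x : x' ≠ x) (hx'y : (x', y) ∈ N) :
    ¬ Matched (insert (x, y) (N.erase (x', y))) x' := by
  rintro ⟨b, hb⟩
  rcases mem_insert.1 hb with h | h
  · exact hx'x (Prod.ext_iff.1 h).1
  · obtain ⟨hne, hb⟩ := mem_erase.1 h
    exact hne (by rw [hN.snd_eq_of_mem hb hx'y])

lemma card_reassign (hx : ¬ Matched N x) (hx'y : (x', y) ∈ N) :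
    (insert (x, y) (N.erase (x', y))).card = N.card := by
  rw [card_insert_of_notMem fun h => hx ⟨y, mem_of_mem_erase h⟩, card_erase_add_one hx'y]

lemma IsMaxMatching.exists_mem_of_not_matched (hN : IsMaxMatching E N) (hxy : (x, y) ∈ E)
    (hx : ¬ Matched N x) : ∃ x', (x', y) ∈ N := by
  by_contra! hy
  have hle := hN.2.2 _ (insert_subset hxy hN.1) (hN.2.1.insert_of_free hx hy)
  rw [card_insert_of_notMem fun h => hx ⟨y, h⟩] at hle
  omega

lemma IsMaxMatching.reassign (hN : IsMaxMatching E N) (hxy : (x, y) ∈ E) (hx : ¬ Matched N x)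
    (hx'y : (x', y) ∈ N) : IsMaxMatching E (insert (x, y) (N.erase (x', y))) := by
  refine ⟨insert_subset hxy ((erase_subset _ _).trans hN.1), ?_, card_reassign hx hx'y ▸ hN.2.2⟩
  exact IsMatching.reassign hN.2.1 hx hx'y

lemma card_sdiff_reassign_lt {M : Finset (α × β)} (hM : IsMatching M) (hxy : (x, y) ∈ M)
    (hx : ¬ Matched N x) (hx'x : x' ≠ x) :
    (M \ insert (x, y) (N.erase (x', y))).card < (M \ N).card := by
  refine card_lt_card ((ssubset_iff_of_subset ?_).2 ⟨(x, y), ?_, ?_⟩)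
  · intro e he
    simp only [mem_sdiff, mem_insert, mem_erase, not_or, not_and_or, not_not] at he ⊢
    obtain ⟨heM, hexy, hex'y | heN⟩ := he
    · subst hex'y
      exact absurd (hM.fst_eq_of_mem heM hxy) hx'x
    · exact ⟨heM, heN⟩
  · exact mem_sdiff.2 ⟨hxy, fun h => hx ⟨y, h⟩⟩
  · simp

end Reassign

def IsAltChain (M N : Finset (α × β)) {n : ℕ} (f : Fin (n + 1) → α) (g : Fin n → β) : Prop :=
  (∀ i : Fin n, (f i.castSucc, g i) ∈ M) ∧ ∀ i : Fin n, (f i.succ, g i) ∈ N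

namespace IsAltChain

variable {E M N : Finset (α × β)} {n : ℕ} {f : Fin (n + 1) → α} {g : Fin n → β}

lemma nil (M N : Finset (α × β)) (x : α) : IsAltChain M N (fun _ : Fin 1 => x) Fin.elim0 :=
  ⟨fun i => i.elim0, fun i => i.elim0⟩

lemma cons (hc : IsAltChain M N f g) {x : α} {y : β} (hxy : (x, y) ∈ M) (hy : (f 0, y) ∈ N) :
    IsAltChain M N (Fin.cons x f : Fin (n + 2) → α) (Fin.cons y g : Fin (n + 1) → β) := by
  refine ⟨Fin.cases ?_ fun i => ?_, Fin.cases ?_ fun i => ?_⟩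
  · simpa using hxy
  · simpa using hc.1 i
  · simpa using hy
  · simpa using hc.2 i

lemma injective (hc : IsAltChain M N f g) (hM : IsMatching M) (hN : IsMatching N)
    (hfree : ¬ Matched N (f 0)) : Function.Injective f := by
  have hne_zero : ∀ j : Fin n, f j.succ ≠ f 0 := fun j h => hfree ⟨g j, h ▸ hc.2 j⟩
  intro i
  induction i using Fin.induction with
  | zero =>
    intro j hj
    cases j using Fin.cases with
    | zero => rfl
    | succ j => exact absurd hj.symm (hne_zero j)
  | succ i ih =>
    intro j hj
    cases j using Fin.cases with
    | zero => exact absurd hj (hne_zero i)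
    | succ j =>
      have hg : g i = g j := hN.snd_eq_of_mem (hc.2 i) (hj ▸ hc.2 j)
      have hf : f i.castSucc = f j.castSucc := hM.fst_eq_of_mem (hc.1 i) (hg ▸ hc.1 j)
      rw [Fin.castSucc_injective _ (ih hf)]

lemma injective_right (hc : IsAltChain M N f g) (hM : IsMatching M) (hf : Function.Injective f) :
    Function.Injective g := fun i j hij =>
  Fin.castSucc_injective _ (hf (hM.fst_eq_of_mem (hc.1 i) (hij ▸ hc.1 j)))

lemma notMem_left (hc : IsAltChain M N f g) (hM : IsMatching M) (hf : Function.Injective f)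
    (i : Fin n) : (f i.succ, g i) ∉ M := fun h =>
  (Fin.castSucc_lt_succ (i := i)).ne (hf (hM.fst_eq_of_mem (hc.1 i) h))

lemma of_insert [DecidableEq α] [DecidableEq β] {x : α} {y : β}
    (hc : IsAltChain M (insert (x, y) N) f g) (hM : IsMatching M) (hxy : (x, y) ∈ M)
    (hf : Function.Injective f) : IsAltChain M N f g := by
  refine ⟨hc.1, fun i => (mem_insert.1 (hc.2 i)).resolve_left fun h => ?_⟩
  obtain ⟨hfx, rfl⟩ := Prod.ext_iff.1 h
  exact (Fin.castSucc_lt_succ (i := i)).ne (hf ((hM.fst_eq_of_mem (hc.1 i) hxy).trans hfx.symm))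

lemma mono_right (hc : IsAltChain M N f g) {N' : Finset (α × β)} (hNN' : N ⊆ N') :
    IsAltChain M N' f g :=
  ⟨hc.1, fun i => hNN' (hc.2 i)⟩

lemma evenAltPath (hc : IsAltChain M N f g) (hM : IsMatching M) (hN : IsMatching N)
    (hNE : N ⊆ E) (hfree : ¬ Matched N (f 0)) : EvenAltPath E M (f 0) (f (Fin.last n)) := by
  have hf := hc.injective hM hN hfree
  exact ⟨n, f, g, hf, hc.injective_right hM hf, rfl, rfl, hc.1,
    fun i => ⟨hNE (hc.2 i), hc.notMem_left hM hf i⟩⟩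

end IsAltChain

theorem exists_altChain_to_not_matched {E M N : Finset (α × β)} (hME : M ⊆ E)
    (hM : IsMatching M) (hN : IsMaxMatching E N) {x : α} (hx : ¬ Matched N x) :
    ∃ (n : ℕ) (f : Fin (n + 1) → α) (g : Fin n → β),
      IsAltChain M N f g ∧ f 0 = x ∧ ¬ Matched M (f (Fin.last n)) := by
  classical
  induction hk : (M \ N).card using Nat.strong_induction_on generalizing N x with
  | _ k ih =>
  by_cases hxM : Matched M x
  swap
  · exact ⟨0, fun _ => x, Fin.elim0, IsAltChain.nil M N x, rfl, hxM⟩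
  obtain ⟨y, hxy⟩ := hxM
  obtain ⟨x', hx'y⟩ := hN.exists_mem_of_not_matched (hME hxy) hx
  have hx'x : x' ≠ x := by
    rintro rfl
    exact hx ⟨y, hx'y⟩
  obtain ⟨n, f, g, hc, hf0, hlast⟩ := ih _ (hk ▸ card_sdiff_reassign_lt hM hxy hx hx'x)
    (hN.reassign (hME hxy) hx hx'y) (not_matched_reassign hN.2.1 hx'x hx'y) rfl
  have hf := hc.injective hM (IsMatching.reassign hN.2.1 hx hx'y)
    (by rw [hf0]; exact not_matched_reassign hN.2.1 hx'x hx'y)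
  refine ⟨n + 1, Fin.cons x f, Fin.cons y g, ?_, rfl, by simpa using hlast⟩
  exact ((hc.of_insert hM hxy hf).mono_right (erase_subset _ _)).cons hxy (hf0 ▸ hx'y)

theorem stmt_13_general (E M : Finset (α × β)) (hM : IsMaxMatching E M) (x : α)
    (hpath : ¬ ∃ x', ¬ Matched M x' ∧ EvenAltPath E M x x') :
    InAllMax E x := by
  intro N hN
  by_contra hxN
  obtain ⟨n, f, g, hc, rfl, hfree⟩ := exists_altChain_to_not_matched hM.1 hM.2.1 hN hxN
  exact hpath ⟨_, hfree, hc.evenAltPath hM.2.1 hN.2.1 hN.1 hxN⟩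

/-- If `x` is matched by a maximum matching `M` and there is no even-length alternating path
(w.r.t. `M`) from `x` to a free vertex, then `x` participates in every maximum matching. -/
theorem stmt_13 (E M : Finset (α × β)) (hM : IsMaxMatching E M) (x : α)
    (hx : Matched M x)
    (hpath : ¬ ∃ x', ¬ Matched M x' ∧ EvenAltPath E M x x') :
    InAllMax E x :=
  stmt_13_general E M hM x hpath
end
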